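/- arXiv:2003.07222 — 2 statements merged into one kernel-verified Lean document; each statement's English description precedes it below -/
import Mathlib

section
/- Let X be a strong abstract state space, P a Markov projection on X, and T a Markov operator on X with PT = TP and TP = P. Say that T satisfies condition 𝔇_P if there exist a constant τ ∈ (0,1], an integer n₀ ∈ ℕ, and a Markov projection Q on X with Q = QP = PQ, such that for every x ∈ K there exists φ_x ∈ X₊ with ‖φ_x‖ ≤ τ/4 and T^{n₀}x + φ_x − τ·Qx ∈ X₊. Then T satisfies condition 𝔇_P if and only if T is uniformly P-ergodic. -/
/-!
For `x ∈ ker P` write `x = y - z` with `y, z ≥ 0`, `f y = f z = a` and `‖x‖ = 2a`. The minorization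
`Tⁿ⁰ u + φ_u - τ Q u ≥ 0` holds for both normalized states `u = y / a` and `v = z / a`, and `Q u = Q v`
because `Q` factors through `P`; so the common part `τ Q u` cancels in `Tⁿ⁰ u - Tⁿ⁰ v`, leaving the difference
of two positive vectors of mass `≤ 1 - 3τ/4` plus the two error terms `φ`. Hence `Tⁿ⁰` contracts `ker P`
by `1 - τ/2`. Since `Tⁿ - P = Tⁿ (1 - P)` and `‖Tⁿ - P‖` is antitone, this gives geometric decay.
Conversely, when `‖Tⁿ⁰ - P‖ ≤ 1/4`, the negative part of `Tⁿ⁰ x - P x` serves as `φ_x` with `τ = 1`, `Q = P`.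
-/

open Filter Topology

lemma pow_mul_eq_of_mul_eq {M : Type*} [Monoid M] {a p : M} (h : a * p = p) (n : ℕ) :
    a ^ n * p = p := by
  induction n with
  | zero => rw [pow_zero, one_mul]
  | succ n ih => rw [pow_succ, mul_assoc, h, ih]

lemma antitone_norm_pow_sub {R : Type*} [SeminormedRing R] {a p : R} (ha : ‖a‖ ≤ 1)
    (hap : a * p = p) : Antitone fun n : ℕ => ‖a ^ n - p‖ := by
  refine antitone_nat_of_succ_le fun n => ?_
  calc ‖a ^ (n + 1) - p‖ = ‖a * (a ^ n - p)‖ := by rw [mul_sub, hap, pow_succ']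
    _ ≤ ‖a‖ * ‖a ^ n - p‖ := norm_mul_le _ _
    _ ≤ ‖a ^ n - p‖ := mul_le_of_le_one_left (norm_nonneg _) ha

section Operators

variable {X : Type*} [NormedAddCommGroup X] [NormedSpace ℝ X]

lemma apply_pow_apply_of_forall_apply_eq {g : X →L[ℝ] ℝ} {T : X →L[ℝ] X}
    (h : ∀ x, g (T x) = g x) (n : ℕ) (x : X) : g ((T ^ n) x) = g x := by
  induction n with
  | zero => rfl
  | succ n ih => rw [pow_succ', mul_apply_eq_comp, h, ih]

lemma norm_pow_apply_le_of_ker {S P : X →L[ℝ] X} (hPS : Commute P S) {ρ : ℝ} (hρ : 0 ≤ ρ)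
    (hS : ∀ x, P x = 0 → ‖S x‖ ≤ ρ * ‖x‖) (k : ℕ) {x : X} (hx : P x = 0) :
    ‖(S ^ k) x‖ ≤ ρ ^ k * ‖x‖ := by
  induction k with
  | zero => simp
  | succ k ih =>
    have hPSk : P ((S ^ k) x) = 0 := by
      rw [← mul_apply_eq_comp, (hPS.pow_right k).eq, mul_apply_eq_comp,
        hx, map_zero]
    calc ‖(S ^ (k + 1)) x‖ = ‖S ((S ^ k) x)‖ := by rw [pow_succ', mul_apply_eq_comp]
      _ ≤ ρ * ‖(S ^ k) x‖ := hS _ hPSk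
      _ ≤ ρ * (ρ ^ k * ‖x‖) := mul_le_mul_of_nonneg_left ih hρ
      _ = ρ ^ (k + 1) * ‖x‖ := by ring

lemma norm_pow_sub_le_of_ker {S P : X →L[ℝ] X} (hSP : S * P = P) (hPP : P * P = P)
    (hPS : Commute P S) {ρ : ℝ} (hρ : 0 ≤ ρ) (hS : ∀ x, P x = 0 → ‖S x‖ ≤ ρ * ‖x‖) (k : ℕ) :
    ‖S ^ k - P‖ ≤ ρ ^ k * ‖1 - P‖ := by
  refine ContinuousLinearMap.opNorm_le_bound _ (by positivity) fun x => ?_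
  have hker : P ((1 - P) x) = 0 := by
    rw [← mul_apply_eq_comp, mul_sub, mul_one, hPP, sub_self,
      zero_apply]
  have hfactor : S ^ k - P = S ^ k * (1 - P) := by
    rw [mul_sub, mul_one, pow_mul_eq_of_mul_eq hSP]
  calc ‖(S ^ k - P) x‖ = ‖(S ^ k) ((1 - P) x)‖ := by rw [hfactor, mul_apply_eq_comp]
    _ ≤ ρ ^ k * ‖(1 - P) x‖ := norm_pow_apply_le_of_ker hPS hρ hS k hker
    _ ≤ ρ ^ k * (‖1 - P‖ * ‖x‖) := by gcongr; exact (1 - P).le_opNorm x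
    _ = ρ ^ k * ‖1 - P‖ * ‖x‖ := by ring

lemma tendsto_norm_pow_sub_of_ker {T P : X →L[ℝ] X} (hT : ‖T‖ ≤ 1) (hTP : T * P = P)
    (hPP : P * P = P) (hPT : Commute P T) {m : ℕ} {ρ : ℝ} (hρ₀ : 0 ≤ ρ) (hρ₁ : ρ < 1)
    (hker : ∀ x, P x = 0 → ‖(T ^ m) x‖ ≤ ρ * ‖x‖) :
    Tendsto (fun n : ℕ => ‖T ^ n - P‖) atTop (𝓝 0) := by
  have hbound : ∀ n : ℕ, ‖T ^ n - P‖ ≤ ρ ^ (n / (m + 1)) * ‖1 - P‖ := fun n => by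
    -- dividing by `m + 1` rather than `m` also covers `m = 0`
    have hle : m * (n / (m + 1)) ≤ n :=
      (Nat.mul_le_mul_right _ m.le_succ).trans (Nat.mul_div_le n (m + 1))
    calc ‖T ^ n - P‖ ≤ ‖(T ^ m) ^ (n / (m + 1)) - P‖ := by
          rw [← pow_mul]; exact antitone_norm_pow_sub hT hTP hle
      _ ≤ ρ ^ (n / (m + 1)) * ‖1 - P‖ :=
          norm_pow_sub_le_of_ker (pow_mul_eq_of_mul_eq hTP m) hPP (hPT.pow_right m) hρ₀ hker _
  have hdecay : Tendsto (fun n : ℕ => ρ ^ (n / (m + 1)) * ‖1 - P‖) atTop (𝓝 0) := by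
    simpa using ((tendsto_pow_atTop_nhds_zero_of_lt_one hρ₀ hρ₁).comp
      (Nat.tendsto_div_const_atTop m.succ_ne_zero)).mul_const ‖1 - P‖
  exact squeeze_zero (fun n => norm_nonneg _) hbound hdecay

end Operators

section StateSpace

variable {X : Type*} [NormedAddCommGroup X] [NormedSpace ℝ X] {C : Set X} {f : X →L[ℝ] ℝ}

lemma norm_le_of_eq_sub (hf : ∀ x ∈ C, 0 ≤ f x)
    (hnorm : ∀ x : X, ‖x‖ = sInf {r : ℝ | ∃ y ∈ C, ∃ z ∈ C, x = y - z ∧ r = f y + f z})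
    {x y z : X} (hy : y ∈ C) (hz : z ∈ C) (hxyz : x = y - z) : ‖x‖ ≤ f y + f z := by
  rw [hnorm x]
  refine csInf_le ⟨0, ?_⟩ ⟨y, hy, z, hz, hxyz, rfl⟩
  rintro r ⟨y', hy', z', hz', -, rfl⟩
  exact add_nonneg (hf y' hy') (hf z' hz')

lemma norm_eq_of_mem (h0 : (0 : X) ∈ C) (hf : ∀ x ∈ C, 0 ≤ f x)
    (hnorm : ∀ x : X, ‖x‖ = sInf {r : ℝ | ∃ y ∈ C, ∃ z ∈ C, x = y - z ∧ r = f y + f z})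
    {x : X} (hx : x ∈ C) : ‖x‖ = f x := by
  refine le_antisymm (by simpa using norm_le_of_eq_sub hf hnorm hx h0 (sub_zero x).symm) ?_
  rw [hnorm x]
  refine le_csInf ⟨f x + f 0, x, hx, 0, h0, (sub_zero x).symm, rfl⟩ ?_
  rintro r ⟨y, -, z, hz, rfl, rfl⟩
  rw [map_sub]
  linarith [hf z hz]

lemma norm_apply_le_of_markov (hf : ∀ x ∈ C, 0 ≤ f x)
    (hnorm : ∀ x : X, ‖x‖ = sInf {r : ℝ | ∃ y ∈ C, ∃ z ∈ C, x = y - z ∧ r = f y + f z})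
    (hstrong : ∀ x : X, ∃ y ∈ C, ∃ z ∈ C, x = y - z ∧ ‖x‖ = f y + f z)
    {S : X →L[ℝ] X} (hS : ∀ x ∈ C, S x ∈ C) (hSf : ∀ x, f (S x) = f x) (x : X) :
    ‖S x‖ ≤ ‖x‖ := by
  obtain ⟨y, hy, z, hz, rfl, hx⟩ := hstrong x
  calc ‖S (y - z)‖ ≤ f (S y) + f (S z) := norm_le_of_eq_sub hf hnorm (hS y hy) (hS z hz) (map_sub ..)
    _ = ‖y - z‖ := by rw [hSf, hSf, hx]

lemma opNorm_le_one_of_markov (hf : ∀ x ∈ C, 0 ≤ f x)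
    (hnorm : ∀ x : X, ‖x‖ = sInf {r : ℝ | ∃ y ∈ C, ∃ z ∈ C, x = y - z ∧ r = f y + f z})
    (hstrong : ∀ x : X, ∃ y ∈ C, ∃ z ∈ C, x = y - z ∧ ‖x‖ = f y + f z)
    {S : X →L[ℝ] X} (hS : ∀ x ∈ C, S x ∈ C) (hSf : ∀ x, f (S x) = f x) : ‖S‖ ≤ 1 :=
  ContinuousLinearMap.opNorm_le_bound _ zero_le_one fun x => by
    simpa using norm_apply_le_of_markov hf hnorm hstrong hS hSf x

lemma exists_mem_norm_le_add_mem (h0 : (0 : X) ∈ C) (hf : ∀ x ∈ C, 0 ≤ f x)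
    (hnorm : ∀ x : X, ‖x‖ = sInf {r : ℝ | ∃ y ∈ C, ∃ z ∈ C, x = y - z ∧ r = f y + f z})
    (hstrong : ∀ x : X, ∃ y ∈ C, ∃ z ∈ C, x = y - z ∧ ‖x‖ = f y + f z) (x : X) :
    ∃ φ ∈ C, ‖φ‖ ≤ ‖x‖ ∧ x + φ ∈ C := by
  obtain ⟨y, hy, z, hz, rfl, hx⟩ := hstrong x
  refine ⟨z, hz, ?_, by rwa [sub_add_cancel]⟩
  rw [norm_eq_of_mem h0 hf hnorm hz, hx]
  linarith [hf y hy]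

lemma norm_sub_le_of_minorization (h0 : (0 : X) ∈ C) (hf : ∀ x ∈ C, 0 ≤ f x)
    (hnorm : ∀ x : X, ‖x‖ = sInf {r : ℝ | ∃ y ∈ C, ∃ z ∈ C, x = y - z ∧ r = f y + f z})
    {S Q : X →L[ℝ] X} (hSf : ∀ x, f (S x) = f x) (hQf : ∀ x, f (Q x) = f x) {τ ε : ℝ}
    (hmin : ∀ x ∈ C, f x = 1 → ∃ φ ∈ C, ‖φ‖ ≤ ε ∧ S x + φ - τ • Q x ∈ C) :
    ∀ u ∈ C, ∀ v ∈ C, f u = 1 → f v = 1 → Q u = Q v → ‖S u - S v‖ ≤ 2 * (1 - τ + 2 * ε) := by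
  intro u hu v hv hfu hfv hQuv
  obtain ⟨φ, hφ, hφε, hA⟩ := hmin u hu hfu
  obtain ⟨ψ, hψ, hψε, hB⟩ := hmin v hv hfv
  have hmass : ∀ w, f w = 1 → ∀ χ ∈ C, ‖χ‖ ≤ ε → f (S w + χ - τ • Q w) ≤ 1 - τ + ε :=
    fun w hw χ hχ hχε => by
      rw [map_sub, map_add, map_smul, hSf, hQf, hw, smul_eq_mul, mul_one,
        ← norm_eq_of_mem h0 hf hnorm hχ]
      linarith
  have hsplit : S u - S v = (S u + φ - τ • Q u) - (S v + ψ - τ • Q v) + (ψ - φ) := by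
    rw [hQuv]; abel
  calc ‖S u - S v‖ ≤ ‖(S u + φ - τ • Q u) - (S v + ψ - τ • Q v)‖ + ‖ψ - φ‖ := by
        rw [hsplit]; exact norm_add_le _ _
    _ ≤ (f (S u + φ - τ • Q u) + f (S v + ψ - τ • Q v)) + (‖ψ‖ + ‖φ‖) :=
        add_le_add (norm_le_of_eq_sub hf hnorm hA hB rfl) (norm_sub_le _ _)
    _ ≤ 2 * (1 - τ + 2 * ε) := by
        linarith [hmass u hfu φ hφ hφε, hmass v hfv ψ hψ hψε]

lemma norm_apply_le_of_norm_sub_le (hsmul : ∀ r : ℝ, 0 ≤ r → ∀ x ∈ C, r • x ∈ C)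
    (hstrong : ∀ x : X, ∃ y ∈ C, ∃ z ∈ C, x = y - z ∧ ‖x‖ = f y + f z)
    {S Q : X →L[ℝ] X} (hQf : ∀ x, f (Q x) = f x) {c : ℝ}
    (hpair : ∀ u ∈ C, ∀ v ∈ C, f u = 1 → f v = 1 → Q u = Q v → ‖S u - S v‖ ≤ 2 * c)
    {x : X} (hx : Q x = 0) : ‖S x‖ ≤ c * ‖x‖ := by
  obtain ⟨y, hy, z, hz, rfl, hnx⟩ := hstrong x
  have hfyz : f y = f z := by
    have := hQf (y - z)
    rw [hx, map_zero, map_sub] at this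
    linarith
  set a := f z
  rcases (show 0 ≤ a by linarith [norm_nonneg (y - z)]).eq_or_lt with ha | ha
  · rw [norm_eq_zero.mp (show ‖y - z‖ = 0 by linarith), map_zero, norm_zero, mul_zero]
  have hscale : ∀ w, f w = a → f (a⁻¹ • w) = 1 := fun w hw => by
    rw [map_smul, smul_eq_mul, hw, inv_mul_cancel₀ ha.ne']
  have hQ : Q (a⁻¹ • y) = Q (a⁻¹ • z) := by
    rw [map_smul, map_smul, ← sub_eq_zero, ← smul_sub, ← map_sub, hx, smul_zero]
  have hyz : y - z = a • (a⁻¹ • y - a⁻¹ • z) := by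
    rw [smul_sub, smul_inv_smul₀ ha.ne', smul_inv_smul₀ ha.ne']
  calc ‖S (y - z)‖ = a * ‖S (a⁻¹ • y) - S (a⁻¹ • z)‖ := by
        rw [hyz, map_smul, map_sub, norm_smul, Real.norm_of_nonneg ha.le]
    _ ≤ a * (2 * c) := mul_le_mul_of_nonneg_left (hpair _ (hsmul _ (inv_nonneg.2 ha.le) y hy) _
          (hsmul _ (inv_nonneg.2 ha.le) z hz) (hscale y hfyz) (hscale z rfl) hQ) ha.le
    _ = c * ‖y - z‖ := by rw [hnx, hfyz]; ring

end StateSpace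

theorem stmt2_general {X : Type*} [NormedAddCommGroup X] [NormedSpace ℝ X]
    (C : Set X) (f : X →L[ℝ] ℝ)
    (hC_smul : ∀ r : ℝ, 0 ≤ r → ∀ x ∈ C, r • x ∈ C)
    (hf_pos : ∀ x ∈ C, x ≠ 0 → 0 < f x)
    (hnorm : ∀ x : X, ‖x‖ = sInf {r : ℝ | ∃ y ∈ C, ∃ z ∈ C, x = y - z ∧ r = f y + f z})
    (hstrong : ∀ x : X, ∃ y ∈ C, ∃ z ∈ C, x = y - z ∧ ‖x‖ = f y + f z)
    (T P : X →L[ℝ] X)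
    (hT_pos : ∀ x ∈ C, T x ∈ C) (hT_f : ∀ x, f (T x) = f x)
    (hP_pos : ∀ x ∈ C, P x ∈ C) (hP_f : ∀ x, f (P x) = f x)
    (hP_proj : P.comp P = P)
    (hComm : P.comp T = T.comp P) (hTP : T.comp P = P) :
    (∃ τ : ℝ, 0 < τ ∧ τ ≤ 1 ∧ ∃ n₀ : ℕ, ∃ Q : X →L[ℝ] X,
      (∀ x ∈ C, Q x ∈ C) ∧ (∀ x, f (Q x) = f x) ∧ Q.comp Q = Q ∧
      Q = Q.comp P ∧ Q = P.comp Q ∧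
      ∀ x ∈ C, f x = 1 → ∃ φ ∈ C, ‖φ‖ ≤ τ / 4 ∧ (T ^ n₀) x + φ - τ • Q x ∈ C) ↔
    Tendsto (fun n : ℕ => ‖T ^ n - P‖) atTop (𝓝 0) := by
  have hf : ∀ x ∈ C, 0 ≤ f x := fun x hx => by
    rcases eq_or_ne x 0 with rfl | hne
    exacts [by rw [map_zero], (hf_pos x hx hne).le]
  have h0 : (0 : X) ∈ C := by
    obtain ⟨y, hy, -⟩ := hstrong 0
    simpa using hC_smul 0 le_rfl y hy
  constructor
  · rintro ⟨τ, hτ₀, hτ₁, n₀, Q, -, hQf, -, hQP, -, hmin⟩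
    refine tendsto_norm_pow_sub_of_ker (opNorm_le_one_of_markov hf hnorm hstrong hT_pos hT_f) hTP
      hP_proj hComm (m := n₀) (ρ := 1 - τ / 2) (by linarith) (by linarith) fun x hx => ?_
    have hQx : Q x = 0 := by rw [hQP, ContinuousLinearMap.comp_apply, hx, map_zero]
    have hpair := norm_sub_le_of_minorization h0 hf hnorm
      (apply_pow_apply_of_forall_apply_eq hT_f n₀) hQf hmin
    convert norm_apply_le_of_norm_sub_le hC_smul hstrong hQf hpair hQx using 2
    ring
  · intro h
    obtain ⟨n₀, hn₀⟩ := (h.eventually (gt_mem_nhds (by norm_num : (0 : ℝ) < 1 / 4))).exists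
    refine ⟨1, one_pos, le_rfl, n₀, P, hP_pos, hP_f, hP_proj, hP_proj.symm, hP_proj.symm,
      fun x hx hfx => ?_⟩
    obtain ⟨φ, hφ, hφn, hmem⟩ :=
      exists_mem_norm_le_add_mem h0 hf hnorm hstrong ((T ^ n₀ - P) x)
    refine ⟨φ, hφ, hφn.trans ?_, by simpa [sub_add_eq_add_sub] using hmem⟩
    calc ‖(T ^ n₀ - P) x‖ ≤ ‖T ^ n₀ - P‖ * ‖x‖ := (T ^ n₀ - P).le_opNorm x
      _ ≤ 1 / 4 := by rw [norm_eq_of_mem h0 hf hnorm hx, hfx, mul_one]; exact hn₀.le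

theorem stmt2 {X : Type*} [NormedAddCommGroup X] [NormedSpace ℝ X] [CompleteSpace X]
    (C : Set X) (f : X →L[ℝ] ℝ)
    (hC_closed : IsClosed C)
    (hC_add : ∀ x ∈ C, ∀ y ∈ C, x + y ∈ C)
    (hC_smul : ∀ r : ℝ, 0 ≤ r → ∀ x ∈ C, r • x ∈ C)
    (hC_pointed : ∀ x ∈ C, -x ∈ C → x = 0)
    (hf_pos : ∀ x ∈ C, x ≠ 0 → 0 < f x)
    (hnorm : ∀ x : X, ‖x‖ = sInf {r : ℝ | ∃ y ∈ C, ∃ z ∈ C, x = y - z ∧ r = f y + f z})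
    (hstrong : ∀ x : X, ∃ y ∈ C, ∃ z ∈ C, x = y - z ∧ ‖x‖ = f y + f z)
    (T P : X →L[ℝ] X)
    (hT_pos : ∀ x ∈ C, T x ∈ C) (hT_f : ∀ x, f (T x) = f x)
    (hP_pos : ∀ x ∈ C, P x ∈ C) (hP_f : ∀ x, f (P x) = f x)
    (hP_proj : P.comp P = P)
    (hComm : P.comp T = T.comp P) (hTP : T.comp P = P) :
    (∃ τ : ℝ, 0 < τ ∧ τ ≤ 1 ∧ ∃ n₀ : ℕ, ∃ Q : X →L[ℝ] X,
      (∀ x ∈ C, Q x ∈ C) ∧ (∀ x, f (Q x) = f x) ∧ Q.comp Q = Q ∧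
      Q = Q.comp P ∧ Q = P.comp Q ∧
      ∀ x ∈ C, f x = 1 → ∃ φ ∈ C, ‖φ‖ ≤ τ / 4 ∧ (T ^ n₀) x + φ - τ • Q x ∈ C) ↔
    Tendsto (fun n : ℕ => ‖T ^ n - P‖) atTop (𝓝 0) :=
  stmt2_general C f hC_smul hf_pos hnorm hstrong T P hT_pos hT_f hP_pos hP_f hP_proj hComm hTP
end

section
/- Let X be a complex Banach space, T a bounded linear operator on X with ‖T‖ ≤ 1, and P a bounded projection (P ∘ P = P) on X with ‖P‖ ≤ 1 and PT = TP = P. If δ_P(T^{n₀}) < 1 for some n₀ ∈ ℕ, then r(T − P) < 1. -/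
open Filter Topology

/-- The generalized Dobrushin ergodicity coefficient of `T` with respect to `P`:
`δ_P(T) = sup {‖T x‖ : P x = 0, ‖x‖ ≤ 1}`. -/
noncomputable def dobrushinCoeff {X : Type*} [NormedAddCommGroup X] [NormedSpace ℂ X]
    (P T : X →L[ℂ] X) : ℝ :=
  sSup {r : ℝ | ∃ x : X, P x = 0 ∧ ‖x‖ ≤ 1 ∧ r = ‖T x‖}

/-!
Put `Q = T - P` and `δ = δ_P(T^n) < 1`. Since `P T = P` and `P² = P`, the kernel of `P` is
`T`-invariant and contains the range of `Q`, and `Q` acts as `T` on it; hence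
`Q^(m+1) = T^m Q`. On `ker P` the operator `T^n` shrinks norms by the factor `δ`, so
`‖Q^(nk+1)‖ ≤ δ^k ‖Q‖ < 1` for large `k`, and `r(Q)^(nk+1) ≤ ‖Q^(nk+1)‖` gives `r(Q) < 1`.
-/

theorem mul_pow_eq_self_of_mul_eq_self {M : Type*} [Monoid M] {p t : M} (h : p * t = p)
    (m : ℕ) : p * t ^ m = p := by
  induction m with
  | zero => simp
  | succ m ih => rw [pow_succ, ← mul_assoc, ih, h]

theorem mul_sub_eq_zero_of_mul_eq_self {R : Type*} [NonUnitalNonAssocRing R] {p t : R}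
    (hpt : p * t = p) (hpp : p * p = p) : p * (t - p) = 0 := by
  rw [mul_sub, hpt, hpp, sub_self]

theorem sub_pow_succ_eq_pow_mul_sub {R : Type*} [Ring R] {p t : R} (hpt : p * t = p)
    (hpp : p * p = p) (m : ℕ) : (t - p) ^ (m + 1) = t ^ m * (t - p) := by
  induction m with
  | zero => simp
  | succ m ih =>
    rw [pow_succ, ih, mul_assoc, sub_mul (c := t - p), mul_sub_eq_zero_of_mul_eq_self hpt hpp,
      sub_zero, ← mul_assoc, ← pow_succ]

theorem spectralRadius_lt_one_of_norm_pow_lt_one {𝕜 A : Type*} [NormedField 𝕜] [NormedRing A]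
    [NormedAlgebra 𝕜 A] [CompleteSpace A] [NormOneClass A] {a : A} {n : ℕ} (hn : n ≠ 0)
    (h : ‖a ^ n‖ < 1) : spectralRadius 𝕜 a < 1 := by
  have hpow : spectralRadius 𝕜 a ^ n < 1 :=
    (spectrum.spectralRadius_pow_le a n hn).trans_lt <|
      (spectrum.spectralRadius_le_nnnorm (a ^ n)).trans_lt (by exact_mod_cast h)
  by_contra! h1
  exact (one_le_pow₀ h1).not_gt hpow

section Dobrushin

variable {X : Type*} [NormedAddCommGroup X] [NormedSpace ℂ X]

theorem bddAbove_dobrushinCoeff (P T : X →L[ℂ] X) :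
    BddAbove {r : ℝ | ∃ x : X, P x = 0 ∧ ‖x‖ ≤ 1 ∧ r = ‖T x‖} := by
  refine ⟨‖T‖, ?_⟩
  rintro r ⟨x, -, hx, rfl⟩
  exact T.le_of_opNorm_le_of_le le_rfl hx |>.trans_eq (mul_one _)

theorem dobrushinCoeff_nonneg (P T : X →L[ℂ] X) : 0 ≤ dobrushinCoeff P T :=
  le_csSup (bddAbove_dobrushinCoeff P T) ⟨0, map_zero P, by simp, by simp⟩

theorem norm_apply_le_dobrushinCoeff_mul {P : X →L[ℂ] X} (T : X →L[ℂ] X) {x : X}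
    (hx : P x = 0) : ‖T x‖ ≤ dobrushinCoeff P T * ‖x‖ := by
  rcases eq_or_ne x 0 with rfl | hx0
  · simp
  set u : X := (‖x‖⁻¹ : ℂ) • x
  have hu : ‖T u‖ ≤ dobrushinCoeff P T :=
    le_csSup (bddAbove_dobrushinCoeff P T) ⟨u, by simp [u, hx], (norm_smul_inv_norm hx0).le, rfl⟩
  have hTx : T x = (‖x‖ : ℂ) • T u := by
    simp [u, smul_smul, norm_ne_zero_iff.mpr hx0]
  rw [hTx, norm_smul, Complex.norm_real, norm_norm, mul_comm]
  exact mul_le_mul_of_nonneg_right hu (norm_nonneg x)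

theorem norm_pow_mul_apply_le_dobrushinCoeff_pow_mul {P T : X →L[ℂ] X} (hPT : P.comp T = P)
    (n k : ℕ) {x : X} (hx : P x = 0) :
    ‖(T ^ (n * k)) x‖ ≤ dobrushinCoeff P (T ^ n) ^ k * ‖x‖ := by
  induction k with
  | zero => simp
  | succ k ih =>
    have hker : P ((T ^ (n * k)) x) = 0 := by
      rw [← mul_apply_eq_comp, mul_pow_eq_self_of_mul_eq_self hPT, hx]
    calc ‖(T ^ (n * (k + 1))) x‖ = ‖(T ^ n) ((T ^ (n * k)) x)‖ := by
          rw [mul_add_one, add_comm, pow_add, mul_apply_eq_comp]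
      _ ≤ dobrushinCoeff P (T ^ n) * ‖(T ^ (n * k)) x‖ :=
          norm_apply_le_dobrushinCoeff_mul _ hker
      _ ≤ dobrushinCoeff P (T ^ n) * (dobrushinCoeff P (T ^ n) ^ k * ‖x‖) := by
          gcongr
          exact dobrushinCoeff_nonneg P _
      _ = dobrushinCoeff P (T ^ n) ^ (k + 1) * ‖x‖ := by ring

theorem norm_sub_pow_le_dobrushinCoeff_pow_mul {P T : X →L[ℂ] X} (hProj : P.comp P = P)
    (hPT : P.comp T = P) (n k : ℕ) :
    ‖(T - P) ^ (n * k + 1)‖ ≤ dobrushinCoeff P (T ^ n) ^ k * ‖T - P‖ := by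
  refine ContinuousLinearMap.opNorm_le_bound _
    (mul_nonneg (pow_nonneg (dobrushinCoeff_nonneg P _) k) (norm_nonneg _)) fun x => ?_
  have hker : P ((T - P) x) = 0 := by
    rw [← mul_apply_eq_comp, mul_sub_eq_zero_of_mul_eq_self hPT hProj, zero_apply]
  calc ‖((T - P) ^ (n * k + 1)) x‖ = ‖(T ^ (n * k)) ((T - P) x)‖ := by
        rw [sub_pow_succ_eq_pow_mul_sub hPT hProj, mul_apply_eq_comp]
    _ ≤ dobrushinCoeff P (T ^ n) ^ k * ‖(T - P) x‖ :=
        norm_pow_mul_apply_le_dobrushinCoeff_pow_mul hPT n k hker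
    _ ≤ dobrushinCoeff P (T ^ n) ^ k * (‖T - P‖ * ‖x‖) := by
        have := dobrushinCoeff_nonneg P (T ^ n)
        gcongr
        exact (T - P).le_opNorm x
    _ = _ := by ring

end Dobrushin

theorem stmt5_general {X : Type*} [NormedAddCommGroup X] [NormedSpace ℂ X] [CompleteSpace X]
    (T P : X →L[ℂ] X)
    (hProj : P.comp P = P) (hPT : P.comp T = P)
    (h : ∃ n₀ : ℕ, dobrushinCoeff P (T ^ n₀) < 1) :
    spectralRadius ℂ (T - P) < 1 := by
  rcases subsingleton_or_nontrivial X with _ | _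
  · simp [Subsingleton.elim (T - P) 0]
  obtain ⟨n, hδ⟩ := h
  obtain ⟨k, hk⟩ : ∃ k : ℕ, dobrushinCoeff P (T ^ n) ^ k * ‖T - P‖ < 1 :=
    (((tendsto_pow_atTop_nhds_zero_of_lt_one (dobrushinCoeff_nonneg P _) hδ).mul_const
      ‖T - P‖).eventually (gt_mem_nhds (by simp))).exists
  exact spectralRadius_lt_one_of_norm_pow_lt_one (n * k).succ_ne_zero
    ((norm_sub_pow_le_dobrushinCoeff_pow_mul hProj hPT n k).trans_lt hk)

theorem stmt5 {X : Type*} [NormedAddCommGroup X] [NormedSpace ℂ X] [CompleteSpace X]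
    (T P : X →L[ℂ] X) (hT : ‖T‖ ≤ 1) (hPnorm : ‖P‖ ≤ 1)
    (hProj : P.comp P = P) (hPT : P.comp T = P) (hTP : T.comp P = P)
    (h : ∃ n₀ : ℕ, dobrushinCoeff P (T ^ n₀) < 1) :
    spectralRadius ℂ (T - P) < 1 :=
  stmt5_general T P hProj hPT h
end
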